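/- For any timed causal space T = (aY, H, t), the prescription M(q) = (−t_{xy}, t_{yu}, t_{xy} − t_{yu}) ∈ L₄, for every ordered 4-tuple q = (x,y,z,u) of pairwise distinct points obtained from its cyclic order xyuz by fixing the initial point and transposing the two last entries, extended to all ordered nondegenerate 4-tuples by the equivariance M(σq) = sign(σ)·φ(σ)·M(q), defines unambiguously a map M : regP₄ → L₄ which is a sub-Möbius structure on S¹. -/

import Mathlib

open Set
open scoped ENNReal

noncomputable section

namespace Paper

/-- The pairs `(x,y)` and `(z,u)` of points of the circle separate each other:
`z` and `u` lie in different connected components of the complement of `{x,y}`. -/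
def SeparatesPts (x y z u : Circle) : Prop :=
  z ∈ ({x, y}ᶜ : Set Circle) ∧ u ∈ ({x, y}ᶜ : Set Circle) ∧
    u ∉ connectedComponentIn ({x, y}ᶜ : Set Circle) z

/-- An event: an unordered pair of distinct points of the circle. -/
abbrev Event : Type := {e : Sym2 Circle // ¬ e.IsDiag}

/-- The underlying two-point subset of the circle of an event. -/
def EventPts (e : Event) : Set Circle := {x | x ∈ e.1}

/-- Two events separate each other as pairs of points on the circle. -/
def EventSep (a b : Event) : Prop :=
  ∃ x y z u : Circle, a.1 = s(x, y) ∧ b.1 = s(z, u) ∧ SeparatesPts x y z u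

/-- Two events are in the causal relation iff they do not separate each other. -/
def Causal (a b : Event) : Prop := ¬ EventSep a b

/-- Two events lie on a common light line iff they share a point. -/
def OnLight (a b : Event) : Prop := ∃ x : Circle, x ∈ a.1 ∧ x ∈ b.1

/-- Strong causal relation: causal and not on a common light line. -/
def StrongCausal (a b : Event) : Prop := Causal a b ∧ ¬ OnLight a b

/-- `U` is one of the two open arcs determined by the event `e`. -/
def IsOpenArc (e : Event) (U : Set Circle) : Prop :=
  ∃ z, z ∉ EventPts e ∧ U = connectedComponentIn (EventPts e)ᶜ z

/-- `a ≤ b ≤ c`: the events `a` and `c` lie in the two (closed) arcs determined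
by `b` on different sides of `b`. -/
def Between (a b c : Event) : Prop :=
  ∃ U V : Set Circle, IsOpenArc b U ∧ IsOpenArc b V ∧ U ≠ V ∧
    EventPts a ⊆ closure U ∧ EventPts c ⊆ closure V

/-- `a < b < c`. -/
def SBtw (a b c : Event) : Prop := Between a b c ∧ a ≠ b ∧ c ≠ b

/-- The event `d` is strictly between the events `a` and `c`: `a` and `c` lie in
different open arcs determined by `d`. -/
def StrictlyBetween (d a c : Event) : Prop :=
  ∃ U V : Set Circle, IsOpenArc d U ∧ IsOpenArc d V ∧ U ≠ V ∧
    EventPts a ⊆ U ∧ EventPts c ⊆ V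

/-- `ω` is an infinitely remote point of the semi-metric `d`. -/
def IsRemote (d : Circle → Circle → ℝ≥0∞) (ω : Circle) : Prop :=
  ∀ x, x ≠ ω → d x ω = ⊤

/-- A semi-metric: symmetric, vanishing exactly on the diagonal, with at most one
infinitely remote point. -/
structure IsSemiMetric (d : Circle → Circle → ℝ≥0∞) : Prop where
  symm : ∀ x y, d x y = d y x
  eq_zero_iff : ∀ x y, d x y = 0 ↔ x = y
  top_remote : ∀ x y, d x y = ⊤ → ∃ ω, IsRemote d ω ∧ (x = ω ∨ y = ω)
  remote_unique : ∀ ω ω', IsRemote d ω → IsRemote d ω' → ω = ω'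

/-- The semi-metric `d` has no infinitely remote point in the set `s`. -/
def AvoidsRemote (d : Circle → Circle → ℝ≥0∞) (s : Set Circle) : Prop :=
  ∀ ω ∈ s, ¬ IsRemote d ω

/-- Real-valued distance. -/
def dR (d : Circle → Circle → ℝ≥0∞) (x y : Circle) : ℝ := (d x y).toReal

/-- A Möbius structure on the circle: a class of pairwise Möbius equivalent
semi-metrics (same cross-ratios on nondegenerate 4-tuples), containing for each
point a semi-metric with that point infinitely remote (metric inversion). -/
structure MoebiusStructure : Type where
  sems : Set (Circle → Circle → ℝ≥0∞)
  nonempty : sems.Nonempty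
  isSemiMetric : ∀ d ∈ sems, IsSemiMetric d
  exists_remote : ∀ ω : Circle, ∃ d ∈ sems, IsRemote d ω
  compatible : ∀ d ∈ sems, ∀ d' ∈ sems, ∀ x y z u : Circle,
    x ≠ y → x ≠ z → x ≠ u → y ≠ z → y ≠ u → z ≠ u →
    AvoidsRemote d {x, y, z, u} → AvoidsRemote d' {x, y, z, u} →
    dR d x z * dR d y u * (dR d' x u * dR d' y z)
      = dR d' x z * dR d' y u * (dR d x u * dR d y z)

/-- The open balls, centered at finite points, of the semi-metrics of `D`
having infinitely remote points. -/
def mBalls (D : Set (Circle → Circle → ℝ≥0∞)) : Set (Set Circle) :=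
  {B | ∃ d ∈ D, ∃ ω : Circle, IsRemote d ω ∧ ∃ x : Circle, x ≠ ω ∧
        ∃ r : ℝ≥0∞, 0 < r ∧ B = {y | d x y < r}}

/-- Axiom (T): the `M`-topology on the circle is the standard one. -/
def AxiomT (M : MoebiusStructure) : Prop :=
  TopologicalSpace.generateFrom (mBalls M.sems)
    = (inferInstance : TopologicalSpace Circle)

/-- Axiom (M): monotonicity. -/
def AxiomM (M : MoebiusStructure) : Prop :=
  ∀ x y z u : Circle, SeparatesPts x y z u →
    ∀ d ∈ M.sems, AvoidsRemote d {x, y, z, u} →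
      max (dR d x z * dR d y u) (dR d x u * dR d y z) < dR d x y * dR d z u

/-- A monotone Möbius structure on the circle. -/
def IsMonotone (M : MoebiusStructure) : Prop := AxiomT M ∧ AxiomM M

/-- The pair of events `a = (x,y)`, `b = (z,u)` is `M`-harmonic:
`|xz|·|yu| = |xu|·|yz|`. -/
def MHarmonic (M : MoebiusStructure) (a b : Event) : Prop :=
  ∃ x y z u : Circle, a.1 = s(x, y) ∧ b.1 = s(z, u) ∧
    ∀ d ∈ M.sems, AvoidsRemote d {x, y, z, u} →
      dR d x z * dR d y u = dR d x u * dR d y z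

/-- The timelike line dual to the event `e`, for the Möbius structure `M`. -/
def hline (M : MoebiusStructure) (e : Event) : Set Event := {a | MHarmonic M a e}

/-- Axiom (h1). -/
def AxH1 (H : Set (Set Event)) (line : Event → Set Event) : Prop :=
  (∀ e, line e ∈ H) ∧ ∀ h ∈ H, ∃ e, h = line e

/-- Axiom (h2): any event on `h_e` separates `e`. -/
def AxH2 (line : Event → Set Event) : Prop := ∀ e a, a ∈ line e → EventSep a e

/-- Axiom (h3): any two events on a timelike line are in the causal relation. -/
def AxH3 (line : Event → Set Event) : Prop :=
  ∀ e a b, a ∈ line e → b ∈ line e → Causal a b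

/-- Axiom (h4): for any `x ∉ e` there is a unique event `x_e ∈ h_e` containing `x`. -/
def AxH4 (line : Event → Set Event) : Prop :=
  ∀ e : Event, ∀ x : Circle, x ∉ EventPts e → ∃! a : Event, a ∈ line e ∧ x ∈ a.1

/-- Axiom (h5): duality. -/
def AxH5 (line : Event → Set Event) : Prop := ∀ e a, a ∈ line e → e ∈ line a

/-- Axiom (h6): two distinct events lie on at most one common timelike line. -/
def AxH6 (line : Event → Set Event) : Prop :=
  ∀ a b : Event, a ≠ b → ∀ e e',
    a ∈ line e → b ∈ line e → a ∈ line e' → b ∈ line e' → e = e'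

/-- The projection `x_e`: the unique event of the timelike line `h_e` containing `x`
(junk value if there is none). -/
noncomputable def proj (line : Event → Set Event) (e : Event) (x : Circle) : Event :=
  letI := Classical.propDecidable (∃ a, a ∈ line e ∧ x ∈ a.1)
  if h : ∃ a, a ∈ line e ∧ x ∈ a.1 then h.choose else e

/-- Axiom (t1). -/
def AxT1 (t : Event → Event → ℝ) : Prop := ∀ a b, Causal a b → 0 ≤ t a b

/-- Axiom (t2). -/
def AxT2 (t : Event → Event → ℝ) : Prop :=
  ∀ a b, Causal a b → (t a b = 0 ↔ OnLight a b)

/-- Axiom (t3). -/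
def AxT3 (t : Event → Event → ℝ) : Prop := ∀ a b, Causal a b → t a b = t b a

/-- Axiom (t4a): timelike lines are `t`-geodesics. -/
def AxT4a (line : Event → Set Event) (t : Event → Event → ℝ) : Prop :=
  ∀ a, ∀ e e' e'', e ∈ line a → e' ∈ line a → e'' ∈ line a →
    Between e e' e'' → t e e' + t e' e'' = t e e''

/-- Axiom (t4b): events at any prescribed time on both sides. -/
def AxT4b (line : Event → Set Event) (t : Event → Event → ℝ) : Prop :=
  ∀ a, ∀ e ∈ line a, ∀ s : ℝ, 0 < s →
    ∃ ep em, ep ∈ line a ∧ em ∈ line a ∧ SBtw em e ep ∧ t e ep = s ∧ t e em = s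

/-- Axiom (t5). -/
def AxT5 (line : Event → Set Event) (t : Event → Event → ℝ) : Prop :=
  ∀ e d : Event, ∀ x y z u : Circle,
    e.1 = s(x, y) → d.1 = s(z, u) → StrongCausal e d →
    t (proj line e z) (proj line e u) = t (proj line d x) (proj line d y)

/-- Axiom (t6): harmonicity. -/
def AxT6 (line : Event → Set Event) (t : Event → Event → ℝ) : Prop :=
  ∀ e d : Event, ∀ x y z u : Circle,
    e.1 = s(x, y) → d.1 = s(z, u) → d ∈ line e →
    ∀ a b : Event, a.1 = s(x, z) → b.1 = s(x, u) →
      t (proj line a y) (proj line a u) = t (proj line b y) (proj line b z)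

/-- The time determined by a Möbius structure: `0` on light lines, and the
cross-ratio formula for events in the strong causal relation via a
common perpendicular. -/
def TimeSpec (M : MoebiusStructure) (t : Event → Event → ℝ) : Prop :=
  (∀ a b, OnLight a b → t a b = 0) ∧
  (∀ a b e : Event, a ∈ hline M e → b ∈ hline M e → a ≠ b →
    ∀ x y z z' : Circle, e.1 = s(x, y) → z ∈ a.1 → z' ∈ b.1 →
      ∀ d ∈ M.sems, AvoidsRemote d {x, y, z, z'} →
        t a b = |Real.log (dR d x z' * dR d y z / (dR d x z * dR d y z'))|)

/-- The function `F_{ab}` of the hierarchy of time conditions, on events `d`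
strictly between `(o,ω)` and `(o',ω')`, for `a = (o,o')`, `b = (ω,ω')`. -/
noncomputable def Fab (line : Event → Set Event) (t : Event → Event → ℝ)
    (o ω o' ω' : Circle) (d : Event) : ℝ :=
  (t (proj line d o) (proj line d ω) + t (proj line d o') (proj line d ω')) / 2

end Paper

namespace Paper

/-- The defining property of the reflection `ρ_e` with respect to the event `e`. -/
def RefSpec (line : Event → Set Event) (e : Event) (ρ : Circle → Circle) : Prop :=
  (∀ p ∈ EventPts e, ρ p = p) ∧
    ∀ x, x ∉ EventPts e → ρ x ≠ x ∧ ∃ a ∈ line e, x ∈ a.1 ∧ ρ x ∈ a.1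

/-- The label of a fixed-point-free involution of `Fin 4`
(the partner of `0`, shifted down by one). -/
def label (σ : Equiv.Perm (Fin 4)) : Fin 3 :=
  if σ 0 = 1 then 0 else if σ 0 = 2 then 1 else 2

/-- The three fixed-point-free involutions of `Fin 4`, i.e. the three partitions of a
4-element set into pairs of opposite edges. -/
def inv3 : Fin 3 → Equiv.Perm (Fin 4) :=
  ![Equiv.swap 0 1 * Equiv.swap 2 3, Equiv.swap 0 2 * Equiv.swap 1 3,
    Equiv.swap 0 3 * Equiv.swap 1 2]

/-- The cross-ratio homomorphism `φ : S₄ → S₃`, acting on the labels of the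
partitions into pairs of opposite edges by conjugation. -/
def permAct (π : Equiv.Perm (Fin 4)) (j : Fin 3) : Fin 3 := label (π * inv3 j * π⁻¹)

/-- A sub-Möbius structure on the circle: a map `regP₄ → L₄` equivariant with respect
to the signed cross-ratio homomorphism. -/
def SubMoebius (M : (Fin 4 → Circle) → Fin 3 → ℝ) : Prop :=
  (∀ q : Fin 4 → Circle, Function.Injective q → M q 0 + M q 1 + M q 2 = 0) ∧
  ∀ q : Fin 4 → Circle, Function.Injective q → ∀ π : Equiv.Perm (Fin 4), ∀ j : Fin 3,
    M (q ∘ π) j = ((Equiv.Perm.sign π : ℤ) : ℝ) * M q (permAct π j)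

/-- The base values of the sub-Möbius structure associated with a timed causal space:
for a 4-tuple `q = (x,y,z,u)` whose cyclic order is `xyuz` (i.e. the pairs `(x,u)` and
`(y,z)` separate each other), `M(q) = (−t_{xy}, t_{yu}, t_{xy} − t_{yu})`, where
`t_{xy}` is the time between the projections of `u`, `z` to the timelike line dual to
the event `(x,y)`, and `t_{yu}` the time between the projections of `z`, `x` to the
timelike line dual to the event `(y,u)`. -/
def BaseSpec (line : Event → Set Event) (t : Event → Event → ℝ)
    (M : (Fin 4 → Circle) → Fin 3 → ℝ) : Prop :=
  ∀ q : Fin 4 → Circle, Function.Injective q →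
    SeparatesPts (q 0) (q 3) (q 1) (q 2) →
    ∀ exy eyu : Event, exy.1 = s(q 0, q 1) → eyu.1 = s(q 1, q 3) →
      M q 0 = -(t (proj line exy (q 3)) (proj line exy (q 2))) ∧
      M q 1 = t (proj line eyu (q 2)) (proj line eyu (q 0)) ∧
      M q 2 = t (proj line exy (q 3)) (proj line exy (q 2))
                - t (proj line eyu (q 2)) (proj line eyu (q 0))

/-- The three cross-ratios `(ln cr₁, ln cr₂, ln cr₃)` of a 4-tuple with respect to a
semi-metric. -/
noncomputable def crMap (dm : Circle → Circle → ℝ≥0∞) (q : Fin 4 → Circle) :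
    Fin 3 → ℝ :=
  ![Real.log (dR dm (q 0) (q 2) * dR dm (q 1) (q 3)
      / (dR dm (q 0) (q 3) * dR dm (q 1) (q 2))),
    Real.log (dR dm (q 0) (q 3) * dR dm (q 1) (q 2)
      / (dR dm (q 0) (q 1) * dR dm (q 2) (q 3))),
    Real.log (dR dm (q 0) (q 1) * dR dm (q 2) (q 3)
      / (dR dm (q 1) (q 3) * dR dm (q 0) (q 2)))]

/-- The semi-metrics whose cross-ratio map is the given map `M`. -/
def mapSems (M : (Fin 4 → Circle) → Fin 3 → ℝ) : Set (Circle → Circle → ℝ≥0∞) :=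
  {dm | IsSemiMetric dm ∧ ∀ q : Fin 4 → Circle, Function.Injective q →
    AvoidsRemote dm (Set.range q) → ∀ j, M q j = crMap dm q j}

/-- Harmonicity of a pair of events with respect to a map-form Möbius structure `M`:
`ln cr₃(u,x,y,z) = 0`. -/
def MapHarmonic (M : (Fin 4 → Circle) → Fin 3 → ℝ) (a b : Event) : Prop :=
  ∃ x y z u : Circle, a.1 = s(x, y) ∧ b.1 = s(z, u) ∧
    Function.Injective ![u, x, y, z] ∧ M ![u, x, y, z] 2 = 0

/-- The 4-tuple `(x₁,x₂,x₃,x₄)` is harmonic with respect to the Möbius structure `M`: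
`|x₁x₃|·|x₂x₄| = |x₁x₄|·|x₂x₃|`. -/
def Harm4 (M : MoebiusStructure) (x₁ x₂ x₃ x₄ : Circle) : Prop :=
  ∀ d ∈ M.sems, AvoidsRemote d {x₁, x₂, x₃, x₄} →
    dR d x₁ x₃ * dR d x₂ x₄ = dR d x₁ x₄ * dR d x₂ x₃

/-- The cross-ratio `cr₁`. -/
noncomputable def cr1R (d : Circle → Circle → ℝ≥0∞) (a b c e : Circle) : ℝ :=
  dR d a c * dR d b e / (dR d a e * dR d b c)

/-- A tuple of points of the circle is in cyclic order. -/
def InCyclicOrder {n : ℕ} (q : Fin n → Circle) : Prop :=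
  ∀ i j k l : Fin n, i < j → j < k → k < l → SeparatesPts (q i) (q k) (q j) (q l)

/-- Increment Axiom (I). -/
def AxiomI (M : MoebiusStructure) : Prop :=
  ∀ q : Fin 7 → Circle, Function.Injective q → InCyclicOrder q →
    Harm4 M (q 0) (q 2) (q 4) (q 5) → Harm4 M (q 1) (q 2) (q 3) (q 5) →
    ∀ d ∈ M.sems, AvoidsRemote d (Set.range q) →
      cr1R d (q 3) (q 4) (q 5) (q 6) < cr1R d (q 0) (q 1) (q 5) (q 6)

/-- The Lambert quadrilateral inequality (LQI). -/
def LQI (line : Event → Set Event) (t : Event → Event → ℝ) : Prop :=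
  ∀ a b : Event, ∀ o o' ω ω' : Circle,
    a.1 = s(o, o') → b.1 = s(ω, ω') → StrongCausal a b → SeparatesPts o ω' o' ω →
    ∀ eA eB : Event, eA.1 = s(o, ω) → eB.1 = s(o', ω') →
    ∀ d₀ : Event, a ∈ line d₀ → b ∈ line d₀ →
    ∀ d : Event, StrictlyBetween d eA eB → d ≠ d₀ → a ∈ line d →
      Fab line t o ω o' ω' d₀ < Fab line t o ω o' ω' d

/-- `g` is an `M`-automorphism: a bijection of the circle preserving the cross-ratios
of the Möbius structure `M`. -/
def MAut (M : MoebiusStructure) (g : Circle ≃ Circle) : Prop :=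
  ∀ d ∈ M.sems, ∀ d' ∈ M.sems, ∀ x y z u : Circle,
    x ≠ y → x ≠ z → x ≠ u → y ≠ z → y ≠ u → z ≠ u →
    AvoidsRemote d {x, y, z, u} → AvoidsRemote d' {g x, g y, g z, g u} →
    dR d' (g x) (g z) * dR d' (g y) (g u) * (dR d x u * dR d y z)
      = dR d x z * dR d y u * (dR d' (g x) (g u) * dR d' (g y) (g z))

theorem map_not_isDiag (g : Circle ≃ Circle) (z : Sym2 Circle) (h : ¬ z.IsDiag) :
    ¬ (z.map g).IsDiag := by
  induction z using Sym2.ind with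
  | _ x y =>
    rw [Sym2.map_pair_eq, Sym2.mk_isDiag_iff]
    rw [Sym2.mk_isDiag_iff] at h
    exact fun hg => h (g.injective hg)

/-- The map of events induced by a bijection of the circle. -/
def emap (g : Circle ≃ Circle) (e : Event) : Event :=
  ⟨e.1.map g, map_not_isDiag g e.1 e.2⟩

end Paper

namespace Paper

open Real

/-!
For four distinct points of the circle exactly one of the three splittings into two pairs is
separating (the diagonal); this is read off the arguments, since `{x, y}` separates `{z, u}` iff
exactly one of `arg z`, `arg u` lies between `arg x` and `arg y`. For each of the two side
splittings, axioms (t5) and (t3) make the time `t_{ab}` independent of which of its two events is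
projected on and in which order. Weighting a side splitting by this time and the diagonal by the
sum of the two side times, let the `j`-th coordinate of `M(q)` be the difference of the weights of
the two other splittings. This is the prescribed value on tuples in cyclic order `xyuz`, it lies
in `L₄`, and it is equivariant: `S₄` permutes the splittings through `φ`, by a rotation of `Fin 3`
for even and a reflection for odd permutations. Every tuple is moved to one in cyclic order `xyuz`
by a permutation, which gives uniqueness.
-/

lemma connectedComponentIn_union_eq_left {X : Type*} [TopologicalSpace X] {A B : Set X}
    (hA : IsOpen A) (hB : IsOpen B) (hAB : Disjoint A B) (hA' : IsPreconnected A)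
    {x : X} (hx : x ∈ A) : connectedComponentIn (A ∪ B) x = A :=
  Subset.antisymm
    (isPreconnected_connectedComponentIn.subset_left_of_subset_union hA hB hAB
      (connectedComponentIn_subset _ _) ⟨x, mem_connectedComponentIn (Or.inl hx), hx⟩)
    (hA'.subset_connectedComponentIn hx subset_union_left)

lemma mem_connectedComponentIn_union_iff {X : Type*} [TopologicalSpace X] {A B : Set X}
    (hA : IsOpen A) (hB : IsOpen B) (hAB : Disjoint A B) (hA' : IsPreconnected A)
    (hB' : IsPreconnected B) {x y : X} (hx : x ∈ A ∪ B) :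
    y ∈ connectedComponentIn (A ∪ B) x ↔ y ∈ A ∪ B ∧ (x ∈ A ↔ y ∈ A) := by
  rcases hx with hx | hx
  · rw [connectedComponentIn_union_eq_left hA hB hAB hA' hx]
    simp only [mem_union, hx, true_iff]
    tauto
  · have hxA : x ∉ A := hAB.notMem_of_mem_right hx
    rw [union_comm, connectedComponentIn_union_eq_left hB hA hAB.symm hB' hx, union_comm]
    constructor
    · intro hy; exact ⟨Or.inr hy, iff_of_false hxA (hAB.notMem_of_mem_right hy)⟩
    · rintro ⟨hy | hy, h⟩
      · exact absurd (h.mpr hy) hxA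
      · exact hy

lemma separatesPts_swap_left {x y z u : Circle} :
    SeparatesPts x y z u ↔ SeparatesPts y x z u := by
  rw [SeparatesPts, SeparatesPts, pair_comm]

lemma separatesPts_swap_right {x y z u : Circle} :
    SeparatesPts x y z u ↔ SeparatesPts x y u z := by
  have key : ∀ {z u : Circle}, SeparatesPts x y z u → SeparatesPts x y u z := by
    rintro z u ⟨hz, hu, hcomp⟩
    refine ⟨hu, hz, fun hc => hcomp ?_⟩
    rw [← connectedComponentIn_eq hc]
    exact mem_connectedComponentIn hu
  exact ⟨key, key⟩

lemma separatesPts_congr {a b c d a' b' c' d' : Circle} (hab : s(a, b) = s(a', b'))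
    (hcd : s(c, d) = s(c', d')) : SeparatesPts a b c d ↔ SeparatesPts a' b' c' d' := by
  rcases Sym2.eq_iff.mp hab with ⟨rfl, rfl⟩ | ⟨rfl, rfl⟩ <;>
    rcases Sym2.eq_iff.mp hcd with ⟨rfl, rfl⟩ | ⟨rfl, rfl⟩
  exacts [Iff.rfl, separatesPts_swap_right, separatesPts_swap_left,
    separatesPts_swap_left.trans separatesPts_swap_right]

lemma SeparatesPts.left_ne {x y z u : Circle} (h : SeparatesPts x y z u) : x ≠ y := by
  rintro rfl
  obtain ⟨hz, hu, hcomp⟩ := h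
  rw [pair_eq_singleton] at hz hu hcomp
  exact hcomp ((Circle.isPathConnected_compl_singleton x).isConnected.isPreconnected
    |>.subset_connectedComponentIn hz subset_rfl hu)

lemma SeparatesPts.right_ne {x y z u : Circle} (h : SeparatesPts x y z u) : z ≠ u := by
  rintro rfl
  exact h.2.2 (mem_connectedComponentIn h.1)

lemma arg_mem_Ioc (z : Circle) : Complex.arg z ∈ Ioc (-π) π :=
  ⟨Complex.neg_pi_lt_arg _, Complex.arg_le_pi _⟩

lemma exp_injOn_Ioc_neg_pi : InjOn Circle.exp (Ioc (-π) π) :=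
  Circle.exp_injOn_Ioc (by ring_nf; rfl)

section Arcs

variable {x y : Circle}

lemma mem_arc_iff (hxy : Complex.arg x < Complex.arg y) (w : Circle) :
    w ∈ Circle.exp '' Ioo (Complex.arg x) (Complex.arg y) ↔
      (Complex.arg w - Complex.arg x) * (Complex.arg w - Complex.arg y) < 0 := by
  constructor
  · rintro ⟨θ, hθ, rfl⟩
    have hθ' : θ ∈ Ioc (-π) π :=
      ⟨(arg_mem_Ioc x).1.trans hθ.1, hθ.2.le.trans (arg_mem_Ioc y).2⟩
    rw [exp_injOn_Ioc_neg_pi (arg_mem_Ioc _) hθ' (Circle.exp_arg _)]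
    exact mul_neg_of_pos_of_neg (by linarith [hθ.1]) (by linarith [hθ.2])
  · intro h
    refine ⟨Complex.arg w, ?_, Circle.exp_arg w⟩
    rcases mul_neg_iff.mp h with ⟨h1, h2⟩ | ⟨h1, h2⟩
    · exact ⟨by linarith, by linarith⟩
    · linarith

lemma compl_pair_eq_union_arcs (hxy : Complex.arg x < Complex.arg y) :
    ({x, y}ᶜ : Set Circle) = Circle.exp '' Ioo (Complex.arg x) (Complex.arg y) ∪
      Circle.exp '' Ioo (Complex.arg y) (Complex.arg x + 2 * π) := by
  obtain ⟨hx₁, hx₂⟩ := arg_mem_Ioc x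
  obtain ⟨hy₁, hy₂⟩ := arg_mem_Ioc y
  have hinj : InjOn Circle.exp (Ico (Complex.arg x) (Complex.arg x + 2 * π)) :=
    Circle.exp_injOn_Ico (by linarith)
  ext w
  simp only [mem_compl_iff, mem_insert_iff, mem_singleton_iff, not_or, mem_union]
  constructor
  · rintro ⟨hwx, hwy⟩
    obtain ⟨hw₁, hw₂⟩ := arg_mem_Ioc w
    rcases lt_trichotomy (Complex.arg w) (Complex.arg x) with h1 | h1 | h1
    · exact Or.inr ⟨Complex.arg w + 2 * π, ⟨by linarith, by linarith⟩,
        by rw [Circle.exp_add_two_pi, Circle.exp_arg]⟩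
    · exact absurd h1 (Circle.injective_arg.ne hwx)
    rcases lt_trichotomy (Complex.arg w) (Complex.arg y) with h2 | h2 | h2
    · exact Or.inl ⟨Complex.arg w, ⟨h1, h2⟩, Circle.exp_arg w⟩
    · exact absurd h2 (Circle.injective_arg.ne hwy)
    · exact Or.inr ⟨Complex.arg w, ⟨h2, by linarith⟩, Circle.exp_arg w⟩
  · have hxI : Complex.arg x ∈ Ico (Complex.arg x) (Complex.arg x + 2 * π) :=
      ⟨le_rfl, by linarith⟩
    have hyI : Complex.arg y ∈ Ico (Complex.arg x) (Complex.arg x + 2 * π) :=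
      ⟨hxy.le, by linarith⟩
    rintro (⟨θ, hθ, rfl⟩ | ⟨θ, hθ, rfl⟩) <;>
    · have hθI : θ ∈ Ico (Complex.arg x) (Complex.arg x + 2 * π) :=
        ⟨by linarith [hθ.1], by linarith [hθ.2]⟩
      refine ⟨fun h => ?_, fun h => ?_⟩
      · have := hinj hθI hxI (h.trans (Circle.exp_arg x).symm); linarith [hθ.1, hθ.2]
      · have := hinj hθI hyI (h.trans (Circle.exp_arg y).symm); linarith [hθ.1, hθ.2]

lemma disjoint_arcs (hxy : Complex.arg x < Complex.arg y) :
    Disjoint (Circle.exp '' Ioo (Complex.arg x) (Complex.arg y))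
      (Circle.exp '' Ioo (Complex.arg y) (Complex.arg x + 2 * π)) := by
  rw [disjoint_left]
  rintro _ ⟨θ, hθ, rfl⟩ ⟨θ', hθ', he⟩
  obtain ⟨hx₁, -⟩ := arg_mem_Ioc x
  obtain ⟨-, hy₂⟩ := arg_mem_Ioc y
  have := Circle.exp_injOn_Ico (by linarith) ⟨by linarith [hθ'.1], hθ'.2⟩
    ⟨hθ.1.le, by linarith [hθ.2]⟩ he
  linarith [hθ.2, hθ'.1]

end Arcs

/-- `sepProd a b c d < 0` says that exactly one of `c`, `d` lies strictly between `a` and `b`. -/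
def sepProd (a b c d : ℝ) : ℝ := (c - a) * (c - b) * ((d - a) * (d - b))

lemma mul_neg_iff_not_iff {p q : ℝ} (hp : p ≠ 0) (hq : q ≠ 0) :
    p * q < 0 ↔ ¬ (p < 0 ↔ q < 0) := by
  rw [mul_neg_iff]
  rcases hp.lt_or_gt with hp | hp <;> rcases hq.lt_or_gt with hq | hq <;>
    simp [hp, hq, hp.not_gt, hq.not_gt]

theorem separatesPts_iff_sepProd {x y z u : Circle} (hxy : x ≠ y)
    (hz : z ∉ ({x, y} : Set Circle)) (hu : u ∉ ({x, y} : Set Circle)) :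
    SeparatesPts x y z u ↔
      sepProd (Complex.arg x) (Complex.arg y) (Complex.arg z) (Complex.arg u) < 0 := by
  wlog hlt : Complex.arg x < Complex.arg y generalizing x y
  · have hlt' : Complex.arg y < Complex.arg x :=
      (not_lt.mp hlt).lt_of_ne (fun h => hxy (Circle.arg_eq_arg.mp h).symm)
    rw [separatesPts_swap_left, this hxy.symm (by rwa [pair_comm]) (by rwa [pair_comm]) hlt',
      sepProd, sepProd]
    ring_nf
  have hA := mem_arc_iff hlt
  have hS := compl_pair_eq_union_arcs hlt
  have hne : ∀ w : Circle, w ∉ ({x, y} : Set Circle) →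
      (Complex.arg w - Complex.arg x) * (Complex.arg w - Complex.arg y) ≠ 0 := by
    intro w hw h
    rcases mul_eq_zero.mp h with h | h <;> refine hw ?_
    · exact Or.inl (Circle.arg_eq_arg.mp (sub_eq_zero.mp h))
    · exact Or.inr (Circle.arg_eq_arg.mp (sub_eq_zero.mp h))
  have hz' : z ∈ ({x, y}ᶜ : Set Circle) := hz
  have hu' : u ∈ ({x, y}ᶜ : Set Circle) := hu
  rw [hS] at hz' hu'
  rw [sepProd, mul_neg_iff_not_iff (hne z hz) (hne u hu), ← hA, ← hA, SeparatesPts, hS,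
    mem_connectedComponentIn_union_iff
      (isLocalHomeomorph_circleExp.isOpenMap _ isOpen_Ioo)
      (isLocalHomeomorph_circleExp.isOpenMap _ isOpen_Ioo) ?_
      (isPreconnected_Ioo.image _ Circle.exp.continuous.continuousOn)
      (isPreconnected_Ioo.image _ Circle.exp.continuous.continuousOn) hz']
  · tauto
  · exact disjoint_arcs hlt

lemma sepProd_comm (a b c d : ℝ) : sepProd a b c d = sepProd c d a b := by
  unfold sepProd; ring

/-- With `u = (a-b)(c-d)` and `w = (a-d)(b-c)`, Ptolemy's identity `u + w = (a-c)(b-d)` turns the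
three `sepProd`s of `a, b, c, d` into `(u+w)w`, `-uw` and `u(u+w)`. -/
lemma sepProd_eq_ptolemy (a b c d : ℝ) :
    sepProd a b c d = ((a - b) * (c - d) + (a - d) * (b - c)) * ((a - d) * (b - c)) ∧
      sepProd a c b d = -((a - b) * (c - d) * ((a - d) * (b - c))) ∧
      sepProd a d b c = (a - b) * (c - d) * ((a - b) * (c - d) + (a - d) * (b - c)) := by
  unfold sepProd
  exact ⟨by ring, by ring, by ring⟩

lemma sepProd_trichotomy {a b c d : ℝ} (hab : a ≠ b) (hac : a ≠ c) (had : a ≠ d)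
    (hbc : b ≠ c) (hbd : b ≠ d) (hcd : c ≠ d) :
    sepProd a b c d < 0 ∨ sepProd a c b d < 0 ∨ sepProd a d b c < 0 := by
  have hu : (a - b) * (c - d) ≠ 0 := mul_ne_zero (sub_ne_zero.mpr hab) (sub_ne_zero.mpr hcd)
  have hw : (a - d) * (b - c) ≠ 0 := mul_ne_zero (sub_ne_zero.mpr had) (sub_ne_zero.mpr hbc)
  have hv : (a - b) * (c - d) + (a - d) * (b - c) ≠ 0 := by
    rw [show (a - b) * (c - d) + (a - d) * (b - c) = (a - c) * (b - d) by ring]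
    exact mul_ne_zero (sub_ne_zero.mpr hac) (sub_ne_zero.mpr hbd)
  obtain ⟨h₁, h₂, h₃⟩ := sepProd_eq_ptolemy a b c d
  rw [h₁, h₂, h₃]
  generalize (a - b) * (c - d) = u at *
  generalize (a - d) * (b - c) = w at *
  rcases hu.lt_or_gt with hu | hu <;> rcases hw.lt_or_gt with hw | hw <;>
    rcases hv.lt_or_gt with hv | hv <;>
    first
    | exact Or.inl (by nlinarith)
    | exact Or.inr (Or.inl (by nlinarith))
    | exact Or.inr (Or.inr (by nlinarith))

lemma sepProd_exclusive (a b c d : ℝ) : sepProd a b c d < 0 → ¬ sepProd a c b d < 0 := by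
  obtain ⟨h₁, h₂, -⟩ := sepProd_eq_ptolemy a b c d
  rw [h₁, h₂]
  generalize (a - b) * (c - d) = u
  generalize (a - d) * (b - c) = w
  intro h h'
  nlinarith [sq_nonneg w]

lemma SeparatesPts.symm {x y z u : Circle} (h : SeparatesPts x y z u) :
    SeparatesPts z u x y := by
  have hxy := h.left_ne
  have hzu := h.right_ne
  have hz := h.1
  have hu := h.2.1
  simp only [mem_compl_iff, mem_insert_iff, mem_singleton_iff, not_or] at hz hu
  rw [separatesPts_iff_sepProd hxy h.1 h.2.1] at h
  rw [separatesPts_iff_sepProd hzu (by simp [Ne.symm hz.1, Ne.symm hu.1])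
    (by simp [Ne.symm hz.2, Ne.symm hu.2]), sepProd_comm]
  exact h

lemma separatesPts_comm {x y z u : Circle} : SeparatesPts x y z u ↔ SeparatesPts z u x y :=
  ⟨SeparatesPts.symm, SeparatesPts.symm⟩

theorem separatesPts_trichotomy {w x y z : Circle} (hwx : w ≠ x) (hwy : w ≠ y) (hwz : w ≠ z)
    (hxy : x ≠ y) (hxz : x ≠ z) (hyz : y ≠ z) :
    SeparatesPts w x y z ∨ SeparatesPts w y x z ∨ SeparatesPts w z x y := by
  rw [separatesPts_iff_sepProd hwx (by simp [hwy.symm, hxy.symm]) (by simp [hwz.symm, hxz.symm]),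
    separatesPts_iff_sepProd hwy (by simp [hwx.symm, hxy]) (by simp [hwz.symm, hyz.symm]),
    separatesPts_iff_sepProd hwz (by simp [hwx.symm, hxz]) (by simp [hwy.symm, hyz])]
  have := Circle.injective_arg
  exact sepProd_trichotomy (this.ne hwx) (this.ne hwy) (this.ne hwz) (this.ne hxy)
    (this.ne hxz) (this.ne hyz)

theorem SeparatesPts.not_swap_middle {w x y z : Circle} (h : SeparatesPts w x y z) :
    ¬ SeparatesPts w y x z := by
  have hwx := h.left_ne
  have hyz := h.right_ne
  have hy := h.1
  have hz := h.2.1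
  simp only [mem_compl_iff, mem_insert_iff, mem_singleton_iff, not_or] at hy hz
  rw [separatesPts_iff_sepProd hwx h.1 h.2.1] at h
  rw [separatesPts_iff_sepProd (Ne.symm hy.1) (by simp [hwx.symm, Ne.symm hy.2])
    (by simp [hz.1, hyz.symm])]
  exact sepProd_exclusive _ _ _ _ h

open Classical in
/-- The event `{x, y}`, or an arbitrary fixed event if `x = y`. -/
def pairEvent (x y : Circle) : Event :=
  if h : x = y then ⟨s(1, Circle.exp π), Sym2.mk_isDiag_iff.not.mpr Circle.exp_pi_ne_one.symm⟩
  else ⟨s(x, y), Sym2.mk_isDiag_iff.not.mpr h⟩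

lemma pairEvent_val {x y : Circle} (h : x ≠ y) : (pairEvent x y).1 = s(x, y) := by
  rw [pairEvent, dif_neg h]

lemma pairEvent_comm (x y : Circle) : pairEvent x y = pairEvent y x := by
  rcases eq_or_ne x y with rfl | h
  · rfl
  · exact Subtype.ext (by rw [pairEvent_val h, pairEvent_val h.symm, Sym2.eq_swap])

lemma notMem_eventPts_pairEvent {x y z : Circle} (hxy : x ≠ y) (hz : z ∉ ({x, y} : Set Circle)) :
    z ∉ EventPts (pairEvent x y) := by
  simpa [EventPts, pairEvent_val hxy] using hz

/-- `crossTime line t a b c d` is the time `t_{ab}` of the paper: the time between the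
projections of `c` and `d` to the timelike line dual to the event `(a, b)`. -/
def crossTime (line : Event → Set Event) (t : Event → Event → ℝ) (a b c d : Circle) : ℝ :=
  t (proj line (pairEvent a b) c) (proj line (pairEvent a b) d)

section CrossTime

variable {line : Event → Set Event} {t : Event → Event → ℝ} {a b c d : Circle}

lemma proj_mem (h4 : AxH4 line) {e : Event} {x : Circle} (hx : x ∉ EventPts e) :
    proj line e x ∈ line e := by
  have hex : ∃ a, a ∈ line e ∧ x ∈ a.1 := (h4 e x hx).exists
  rw [proj, dif_pos hex]
  exact hex.choose_spec.1

lemma crossTime_swap_right (h3 : AxH3 line) (h4 : AxH4 line) (ht3 : AxT3 t) (hab : a ≠ b)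
    (hc : c ∉ ({a, b} : Set Circle)) (hd : d ∉ ({a, b} : Set Circle)) :
    crossTime line t a b c d = crossTime line t a b d c :=
  ht3 _ _ (h3 _ _ _ (proj_mem h4 (notMem_eventPts_pairEvent hab hc))
    (proj_mem h4 (notMem_eventPts_pairEvent hab hd)))

lemma crossTime_swap_left : crossTime line t a b c d = crossTime line t b a c d := by
  rw [crossTime, crossTime, pairEvent_comm]

lemma crossTime_congr (h3 : AxH3 line) (h4 : AxH4 line) (ht3 : AxT3 t) (hab : a ≠ b)
    (hc : c ∉ ({a, b} : Set Circle)) (hd : d ∉ ({a, b} : Set Circle)) {a' b' c' d' : Circle}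
    (h₁ : s(a, b) = s(a', b')) (h₂ : s(c, d) = s(c', d')) :
    crossTime line t a b c d = crossTime line t a' b' c' d' := by
  rcases Sym2.eq_iff.mp h₁ with ⟨rfl, rfl⟩ | ⟨rfl, rfl⟩ <;>
    rcases Sym2.eq_iff.mp h₂ with ⟨rfl, rfl⟩ | ⟨rfl, rfl⟩
  · rfl
  · exact crossTime_swap_right h3 h4 ht3 hab hc hd
  · exact crossTime_swap_left
  · exact (crossTime_swap_right h3 h4 ht3 hab hc hd).trans crossTime_swap_left

lemma crossTime_comm (ht5 : AxT5 line t) (hab : a ≠ b) (hcd : c ≠ d)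
    (hc : c ∉ ({a, b} : Set Circle)) (hd : d ∉ ({a, b} : Set Circle))
    (h : ¬ SeparatesPts a b c d) : crossTime line t a b c d = crossTime line t c d a b := by
  refine ht5 _ _ a b c d (pairEvent_val hab) (pairEvent_val hcd) ⟨?_, ?_⟩
  · rintro ⟨x, y, z, u, h₁, h₂, hs⟩
    rw [pairEvent_val hab] at h₁
    rw [pairEvent_val hcd] at h₂
    exact h ((separatesPts_congr h₁ h₂).mpr hs)
  · rintro ⟨p, h₁, h₂⟩
    rw [pairEvent_val hab, Sym2.mem_iff] at h₁
    rw [pairEvent_val hcd, Sym2.mem_iff] at h₂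
    rcases h₂ with rfl | rfl
    · exact hc (by simpa [eq_comm] using h₁)
    · exact hd (by simpa [eq_comm] using h₁)

end CrossTime

def SamePairing {α : Type*} (a a' : Fin 4 → α) : Prop :=
  (s(a 0, a 1) = s(a' 0, a' 1) ∧ s(a 2, a 3) = s(a' 2, a' 3)) ∨
    (s(a 0, a 1) = s(a' 2, a' 3) ∧ s(a 2, a 3) = s(a' 0, a' 1))

namespace SamePairing

lemma comp {α β : Type*} {a a' : Fin 4 → α} (f : α → β) (h : SamePairing a a') :
    SamePairing (f ∘ a) (f ∘ a') := by
  have hf : ∀ {x y x' y' : α}, s(x, y) = s(x', y') → s(f x, f y) = s(f x', f y') :=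
    fun e => by simpa using congrArg (Sym2.map f) e
  rcases h with ⟨h₁, h₂⟩ | ⟨h₁, h₂⟩
  exacts [Or.inl ⟨hf h₁, hf h₂⟩, Or.inr ⟨hf h₁, hf h₂⟩]

variable {a a' : Fin 4 → Circle}

lemma separatesPts_iff (h : SamePairing a a') :
    SeparatesPts (a 0) (a 1) (a 2) (a 3) ↔ SeparatesPts (a' 0) (a' 1) (a' 2) (a' 3) := by
  rcases h with ⟨h₁, h₂⟩ | ⟨h₁, h₂⟩
  · exact separatesPts_congr h₁ h₂
  · exact (separatesPts_congr h₁ h₂).trans separatesPts_comm.symm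

lemma crossTime_eq {line : Event → Set Event} {t : Event → Event → ℝ}
    (h3 : AxH3 line) (h4 : AxH4 line) (ht3 : AxT3 t) (ht5 : AxT5 line t)
    (ha : Function.Injective a) (hsep : ¬ SeparatesPts (a 0) (a 1) (a 2) (a 3))
    (h : SamePairing a a') :
    crossTime line t (a 0) (a 1) (a 2) (a 3) = crossTime line t (a' 0) (a' 1) (a' 2) (a' 3) := by
  have h01 : a 0 ≠ a 1 := ha.ne (by decide)
  have h23 : a 2 ≠ a 3 := ha.ne (by decide)
  have h0 : a 0 ∉ ({a 2, a 3} : Set Circle) := by simp [ha.eq_iff]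
  have h1 : a 1 ∉ ({a 2, a 3} : Set Circle) := by simp [ha.eq_iff]
  have h2 : a 2 ∉ ({a 0, a 1} : Set Circle) := by simp [ha.eq_iff]
  have h3' : a 3 ∉ ({a 0, a 1} : Set Circle) := by simp [ha.eq_iff]
  rcases h with ⟨h₁, h₂⟩ | ⟨h₁, h₂⟩
  · exact crossTime_congr h3 h4 ht3 h01 h2 h3' h₁ h₂
  · rw [crossTime_comm ht5 h01 h23 h2 h3' hsep]
    exact crossTime_congr h3 h4 ht3 h23 h0 h1 h₂ h₁

end SamePairing

/-- `pairing k` splits `Fin 4` into its first two and last two entries as the involution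
`inv3 k` does. -/
def pairing : Fin 3 → Fin 4 → Fin 4 := ![![0, 1, 2, 3], ![0, 2, 1, 3], ![0, 3, 1, 2]]

lemma pairing_injective : ∀ k, Function.Injective (pairing k) := by decide

lemma samePairing_permAct :
    ∀ (σ : Equiv.Perm (Fin 4)) (k : Fin 3),
      SamePairing (σ ∘ pairing k) (pairing (permAct σ k)) := by
  unfold SamePairing; decide

lemma permAct_add : ∀ (σ : Equiv.Perm (Fin 4)) (j : Fin 3),
    (Equiv.Perm.sign σ = 1 ∧ permAct σ (j + 1) = permAct σ j + 1 ∧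
        permAct σ (j + 2) = permAct σ j + 2) ∨
      (Equiv.Perm.sign σ = -1 ∧ permAct σ (j + 1) = permAct σ j + 2 ∧
        permAct σ (j + 2) = permAct σ j + 1) := by
  decide

lemma exists_permAct_eq : ∀ k : Fin 3, ∃ σ : Equiv.Perm (Fin 4), permAct σ 2 = k := by decide

def IsDiagonal (q : Fin 4 → Circle) (k : Fin 3) : Prop :=
  SeparatesPts (q (pairing k 0)) (q (pairing k 1)) (q (pairing k 2)) (q (pairing k 3))

def sideTime (line : Event → Set Event) (t : Event → Event → ℝ) (q : Fin 4 → Circle)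
    (k : Fin 3) : ℝ :=
  crossTime line t (q (pairing k 0)) (q (pairing k 1)) (q (pairing k 2)) (q (pairing k 3))

section Pairings

variable {q : Fin 4 → Circle}

lemma isDiagonal_comp (σ : Equiv.Perm (Fin 4)) (k : Fin 3) :
    IsDiagonal (q ∘ σ) k ↔ IsDiagonal q (permAct σ k) :=
  ((samePairing_permAct σ k).comp q).separatesPts_iff

lemma exists_isDiagonal (hq : Function.Injective q) : ∃ k, IsDiagonal q k := by
  rcases separatesPts_trichotomy (w := q 0) (x := q 1) (y := q 2) (z := q 3)
    (hq.ne (by decide)) (hq.ne (by decide)) (hq.ne (by decide))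
    (hq.ne (by decide)) (hq.ne (by decide)) (hq.ne (by decide)) with h | h | h
  exacts [⟨0, h⟩, ⟨1, h⟩, ⟨2, h⟩]

lemma isDiagonal_unique {k k' : Fin 3} (hk : IsDiagonal q k) (hk' : IsDiagonal q k') :
    k = k' := by
  have h01 : ¬ (IsDiagonal q 0 ∧ IsDiagonal q 1) := fun h => h.1.not_swap_middle h.2
  have h02 : ¬ (IsDiagonal q 0 ∧ IsDiagonal q 2) := fun h =>
    (separatesPts_swap_right.mp h.1).not_swap_middle h.2
  have h12 : ¬ (IsDiagonal q 1 ∧ IsDiagonal q 2) := fun h =>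
    (separatesPts_swap_right.mp h.1).not_swap_middle (separatesPts_swap_right.mp h.2)
  fin_cases k <;> fin_cases k' <;> simp_all

variable {line : Event → Set Event} {t : Event → Event → ℝ}

lemma sideTime_comp (h3 : AxH3 line) (h4 : AxH4 line) (ht3 : AxT3 t) (ht5 : AxT5 line t)
    (hq : Function.Injective q) (σ : Equiv.Perm (Fin 4)) {k : Fin 3}
    (hk : ¬ IsDiagonal (q ∘ σ) k) :
    sideTime line t (q ∘ σ) k = sideTime line t q (permAct σ k) :=
  ((samePairing_permAct σ k).comp q).crossTime_eq h3 h4 ht3 ht5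
    ((hq.comp σ.injective).comp (pairing_injective k)) hk

end Pairings

open Classical in
/-- Plays the role of `ln (|ab|·|cd|)` for the pairing `{ab, cd}` (only differences of weights
matter): the side time for the two side pairings, their sum for the diagonal one. -/
def weight (line : Event → Set Event) (t : Event → Event → ℝ) (q : Fin 4 → Circle)
    (k : Fin 3) : ℝ :=
  if IsDiagonal q k then sideTime line t q (k + 1) + sideTime line t q (k + 2)
  else sideTime line t q k

/-- As `ln cr_j = ln P_{j+1} - ln P_{j+2}` in `crMap`, with `P_k = |ab|·|cd|` for the pairing
`k = {ab, cd}`. -/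
def timeMap (line : Event → Set Event) (t : Event → Event → ℝ) (q : Fin 4 → Circle) :
    Fin 3 → ℝ :=
  fun j => weight line t q (j + 1) - weight line t q (j + 2)

section TimeMap

variable {line : Event → Set Event} {t : Event → Event → ℝ}

lemma weight_comp (h3 : AxH3 line) (h4 : AxH4 line) (ht3 : AxT3 t) (ht5 : AxT5 line t)
    {q : Fin 4 → Circle} (hq : Function.Injective q) (σ : Equiv.Perm (Fin 4))
    (k : Fin 3) : weight line t (q ∘ σ) k = weight line t q (permAct σ k) := by
  by_cases hk : IsDiagonal (q ∘ σ) k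
  · have hside : ∀ k', k' ≠ k → sideTime line t (q ∘ σ) k' = sideTime line t q (permAct σ k') :=
      fun k' hne => sideTime_comp h3 h4 ht3 ht5 hq σ fun hk' => hne (isDiagonal_unique hk' hk)
    have hne : ∀ k : Fin 3, k + 1 ≠ k ∧ k + 2 ≠ k := by decide
    rw [weight, weight, if_pos hk, if_pos ((isDiagonal_comp σ k).mp hk),
      hside _ (hne k).1, hside _ (hne k).2]
    rcases permAct_add σ k with ⟨-, e₁, e₂⟩ | ⟨-, e₁, e₂⟩
    · rw [e₁, e₂]
    · rw [e₁, e₂, add_comm]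
  · rw [weight, weight, if_neg hk, if_neg ((isDiagonal_comp σ k).not.mp hk),
      sideTime_comp h3 h4 ht3 ht5 hq σ hk]

theorem timeMap_subMoebius (h3 : AxH3 line) (h4 : AxH4 line) (ht3 : AxT3 t) (ht5 : AxT5 line t) :
    SubMoebius (timeMap line t) := by
  refine ⟨fun q _ => ?_, fun q hq σ j => ?_⟩
  · show weight line t q 1 - weight line t q 2 + (weight line t q 2 - weight line t q 0)
      + (weight line t q 0 - weight line t q 1) = 0
    ring
  · simp only [timeMap, weight_comp h3 h4 ht3 ht5 hq]
    rcases permAct_add σ j with ⟨hs, e₁, e₂⟩ | ⟨hs, e₁, e₂⟩ <;> rw [hs, e₁, e₂] <;> simp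

theorem timeMap_baseSpec (h3 : AxH3 line) (h4 : AxH4 line) (ht3 : AxT3 t) (ht5 : AxT5 line t) :
    BaseSpec line t (timeMap line t) := by
  intro q hq hsep exy eyu hxy hyu
  obtain rfl : exy = pairEvent (q 0) (q 1) :=
    Subtype.ext (by rw [hxy, pairEvent_val (hq.ne (by decide))])
  obtain rfl : eyu = pairEvent (q 1) (q 3) :=
    Subtype.ext (by rw [hyu, pairEvent_val (hq.ne (by decide))])
  have hd₂ : IsDiagonal q 2 := hsep
  have hd₀ : ¬ IsDiagonal q 0 := fun h => absurd (isDiagonal_unique h hd₂) (by decide)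
  have hd₁ : ¬ IsDiagonal q 1 := fun h => absurd (isDiagonal_unique h hd₂) (by decide)
  have e₀ : sideTime line t q 0 = crossTime line t (q 0) (q 1) (q 3) (q 2) :=
    SamePairing.crossTime_eq (a := q ∘ pairing 0) (a' := ![q 0, q 1, q 3, q 2]) h3 h4 ht3 ht5
      (hq.comp (pairing_injective 0)) hd₀ (Or.inl ⟨rfl, Sym2.eq_swap⟩)
  have e₁ : sideTime line t q 1 = crossTime line t (q 1) (q 3) (q 2) (q 0) :=
    SamePairing.crossTime_eq (a := q ∘ pairing 1) (a' := ![q 1, q 3, q 2, q 0]) h3 h4 ht3 ht5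
      (hq.comp (pairing_injective 1)) hd₁ (Or.inr ⟨Sym2.eq_swap, rfl⟩)
  have w₀ : weight line t q 0 = sideTime line t q 0 := if_neg hd₀
  have w₁ : weight line t q 1 = sideTime line t q 1 := if_neg hd₁
  have w₂ : weight line t q 2 = sideTime line t q 0 + sideTime line t q 1 := if_pos hd₂
  refine ⟨?_, ?_, ?_⟩
  · show weight line t q 1 - weight line t q 2 = -crossTime line t (q 0) (q 1) (q 3) (q 2)
    rw [w₁, w₂, e₀]; ring
  · show weight line t q 2 - weight line t q 0 = crossTime line t (q 1) (q 3) (q 2) (q 0)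
    rw [w₂, w₀, e₁]; ring
  · show weight line t q 0 - weight line t q 1 = crossTime line t (q 0) (q 1) (q 3) (q 2)
      - crossTime line t (q 1) (q 3) (q 2) (q 0)
    rw [w₀, w₁, e₀, e₁]

end TimeMap

lemma SubMoebius.eq_of_comp_eq {M M' : (Fin 4 → Circle) → Fin 3 → ℝ} (hM : SubMoebius M)
    (hM' : SubMoebius M') {q : Fin 4 → Circle} (hq : Function.Injective q)
    (σ : Equiv.Perm (Fin 4)) (h : M (q ∘ σ) = M' (q ∘ σ)) : M q = M' q := by
  have hqσ : (q ∘ σ) ∘ ⇑σ⁻¹ = q := by ext i; simp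
  funext j
  rw [← hqσ, hM.2 _ (hq.comp σ.injective) σ⁻¹ j, hM'.2 _ (hq.comp σ.injective) σ⁻¹ j, h]

lemma BaseSpec.eq {line : Event → Set Event} {t : Event → Event → ℝ}
    {M M' : (Fin 4 → Circle) → Fin 3 → ℝ} (hM : BaseSpec line t M) (hM' : BaseSpec line t M')
    {q : Fin 4 → Circle} (hq : Function.Injective q)
    (hsep : SeparatesPts (q 0) (q 3) (q 1) (q 2)) : M q = M' q := by
  have hxy := pairEvent_val (hq.ne (show (0 : Fin 4) ≠ 1 by decide))
  have hyu := pairEvent_val (hq.ne (show (1 : Fin 4) ≠ 3 by decide))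
  obtain ⟨a₀, a₁, a₂⟩ := hM q hq hsep _ _ hxy hyu
  obtain ⟨b₀, b₁, b₂⟩ := hM' q hq hsep _ _ hxy hyu
  funext j
  fin_cases j
  exacts [a₀.trans b₀.symm, a₁.trans b₁.symm, a₂.trans b₂.symm]

theorem stmt8_general (line : Event → Set Event) (t : Event → Event → ℝ)
    (h3 : AxH3 line) (h4 : AxH4 line) (ht3 : AxT3 t) (ht5 : AxT5 line t) :
    ∃ M : (Fin 4 → Circle) → Fin 3 → ℝ, BaseSpec line t M ∧ SubMoebius M ∧
      ∀ M' : (Fin 4 → Circle) → Fin 3 → ℝ, BaseSpec line t M' → SubMoebius M' →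
        ∀ q : Fin 4 → Circle, Function.Injective q → M' q = M q := by
  have hbase := timeMap_baseSpec h3 h4 ht3 ht5
  have hsub := timeMap_subMoebius h3 h4 ht3 ht5
  refine ⟨timeMap line t, hbase, hsub, fun M' hbase' hsub' q hq => ?_⟩
  obtain ⟨k, hk⟩ := exists_isDiagonal hq
  obtain ⟨σ, rfl⟩ := exists_permAct_eq k
  have hdiag : IsDiagonal (q ∘ σ) 2 := (isDiagonal_comp σ 2).mpr hk
  exact hsub'.eq_of_comp_eq hsub hq σ (hbase'.eq hbase (hq.comp σ.injective) hdiag)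

/-- for any timed causal space `T = (aY, H, t)`, the prescription
`M(q) = (−t_{xy}, t_{yu}, t_{xy} − t_{yu})` on 4-tuples obtained from their cyclic
order `xyuz` by fixing the initial point and transposing the two last entries,
extended by the signed cross-ratio equivariance, defines unambiguously a map
`regP₄ → L₄` which is a sub-Möbius structure on the circle. -/
theorem stmt8 (line : Event → Set Event) (t : Event → Event → ℝ)
    (h1 : AxH1 (Set.range line) line) (h2 : AxH2 line) (h3 : AxH3 line)
    (h4 : AxH4 line) (h5 : AxH5 line) (h6 : AxH6 line)
    (ht1 : AxT1 t) (ht2 : AxT2 t) (ht3 : AxT3 t) (ht4a : AxT4a line t)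
    (ht4b : AxT4b line t) (ht5 : AxT5 line t) (ht6 : AxT6 line t) :
    ∃ M : (Fin 4 → Circle) → Fin 3 → ℝ, BaseSpec line t M ∧ SubMoebius M ∧
      ∀ M' : (Fin 4 → Circle) → Fin 3 → ℝ, BaseSpec line t M' → SubMoebius M' →
        ∀ q : Fin 4 → Circle, Function.Injective q → M' q = M q :=
  stmt8_general line t h3 h4 ht3 ht5

end Paper
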